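/- arXiv:1707.04726 — 2 statements merged into one kernel-verified Lean document; each statement's English description precedes it below -/
import Mathlib

section
/- Let w be a weight with M_w < ∞ and let T : ℓ¹ → ℓ¹ be the continuous linear operator satisfying (T x)(n) = (w(n)/n) ∑_{k=1}^n x(k)/w(k) for all x ∈ ℓ¹ and n ≥ 1. If T is Cesàro bounded, i.e., sup_{n≥1} ‖(1/n) ∑_{m=1}^n T^m‖ < ∞ in operator norm, then ∑_{n≥1} w(n) < ∞. In particular, ∑_{n≥1} w(n) < ∞ whenever T is power bounded (sup_{m≥1} ‖T^m‖ < ∞) or mean ergodic. -/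
/-
Index `n : ℕ` corresponds to the paper's `n+1`.

Let `e₀ = lp.single 1 0 1` and let `u_m = cesaroMean^[m] δ₀` be the `m`-th iterated Cesàro mean of
`δ₀ = Pi.single 0 1`. Then `(T^m e₀)(n) = (w n / w 0) u_m(n)`.
The sequences `u_m` increase pointwise (since δ₀ ≤ its own Cesàro mean) and stay below `1`, so
they converge to a fixed point of the Cesàro mean; such a fixed point is constant, and `u_m(0) = 1`,
so `u_m → 1` pointwise. If `‖(1/N) ∑_{m=1}^N T^m‖ ≤ C`, evaluating at `e₀` and reading off the
`ℓ¹`-norm on a finite set `F` gives `∑_{n∈F} (w n / w 0) (1/N) ∑_{m=1}^N u_m(n) ≤ C`; letting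
`N → ∞` (Cesàro means of a convergent sequence) yields `∑_{n∈F} w n ≤ C w 0`.
Power bounded operators are Cesàro bounded by the triangle inequality, mean ergodic ones by the
uniform boundedness principle.
-/

open Filter Topology

noncomputable section

abbrev ellOne : Type := lp (fun _ : ℕ => ℂ) 1

def IsCesaroOp (v w : ℕ → ℝ) (T : ellOne →L[ℂ] ellOne) : Prop :=
  ∀ (x : ellOne) (n : ℕ),
    (T x : ∀ _ : ℕ, ℂ) n
      = ((w n / (n + 1) : ℝ) : ℂ) * ∑ k ∈ Finset.range (n + 1), (x : ∀ _ : ℕ, ℂ) k / ((v k : ℝ) : ℂ)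

def Mvw (v w : ℕ → ℝ) : ENNReal :=
  ⨆ n : ℕ, ENNReal.ofReal (1 / v n) * ∑' k : ℕ, ENNReal.ofReal (w (n + k) / (n + k + 1))

/-- Cesàro boundedness: the averages `(1/n) ∑_{m=1}^n T^m` are uniformly bounded in norm. -/
def CesaroBounded (T : ellOne →L[ℂ] ellOne) : Prop :=
  ∃ C : ℝ, ∀ n : ℕ, 1 ≤ n → ‖((n : ℂ))⁻¹ • ∑ m ∈ Finset.Icc 1 n, T ^ m‖ ≤ C

/-- Power boundedness: `sup_m ‖T^m‖ < ∞`. -/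
def PowerBounded (T : ellOne →L[ℂ] ellOne) : Prop :=
  ∃ C : ℝ, ∀ m : ℕ, 1 ≤ m → ‖T ^ m‖ ≤ C

/-- Mean ergodicity: the Cesàro averages converge in the strong operator topology. -/
def MeanErgodic (T : ellOne →L[ℂ] ellOne) : Prop :=
  ∀ x : ellOne, ∃ y : ellOne,
    Tendsto (fun n : ℕ => ((n : ℂ))⁻¹ • ∑ m ∈ Finset.Icc 1 n, (T ^ m) x) atTop (nhds y)

def cesaroMean (x : ℕ → ℝ) : ℕ → ℝ := fun n => (∑ k ∈ Finset.range (n + 1), x k) / (n + 1)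

theorem cesaroMean_apply_zero (x : ℕ → ℝ) : cesaroMean x 0 = x 0 := by
  simp [cesaroMean]

theorem cesaroMean_mono : Monotone cesaroMean := fun _ _ hxy n =>
  div_le_div_of_nonneg_right (Finset.sum_le_sum fun k _ => hxy k) (by positivity)

theorem cesaroMean_const (c : ℝ) : cesaroMean (fun _ => c) = fun _ => c := by
  ext n
  simp only [cesaroMean, Finset.sum_const, Finset.card_range, nsmul_eq_mul, Nat.cast_add,
    Nat.cast_one]
  field_simp

theorem continuous_cesaroMean : Continuous cesaroMean := by
  unfold cesaroMean
  fun_prop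

theorem eq_const_of_cesaroMean_eq {x : ℕ → ℝ} (hx : cesaroMean x = x) (n : ℕ) : x n = x 0 := by
  induction n using Nat.strong_induction_on with
  | _ n ih =>
    have h := congrFun hx n
    rw [cesaroMean, Finset.sum_range_succ,
      Finset.sum_congr rfl fun k hk => ih k (Finset.mem_range.mp hk)] at h
    simp only [Finset.sum_const, Finset.card_range, nsmul_eq_mul] at h
    field_simp at h
    rcases Nat.eq_zero_or_pos n with rfl | hn
    · rfl
    · have h' : (n : ℝ) * (x n - x 0) = 0 := by linarith
      exact sub_eq_zero.1 ((mul_eq_zero.1 h').resolve_left (Nat.cast_ne_zero.2 hn.ne'))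

theorem iterate_cesaroMean_apply_zero (x : ℕ → ℝ) (m : ℕ) : cesaroMean^[m] x 0 = x 0 := by
  induction m with
  | zero => rfl
  | succ m ih => rw [Function.iterate_succ_apply', cesaroMean_apply_zero, ih]

theorem single_le_cesaroMean_single : Pi.single 0 1 ≤ cesaroMean (Pi.single 0 1) := by
  intro n
  rcases n with _ | n
  · simp [cesaroMean_apply_zero]
  · rw [Pi.single_eq_of_ne n.succ_ne_zero]
    have hδ : (0 : ℕ → ℝ) ≤ Pi.single 0 1 := Pi.single_nonneg.2 zero_le_one
    exact div_nonneg (Finset.sum_nonneg fun k _ => hδ k) (by positivity)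

theorem monotone_iterate_cesaroMean_single : Monotone fun m => cesaroMean^[m] (Pi.single 0 1) :=
  cesaroMean_mono.monotone_iterate_of_le_map single_le_cesaroMean_single

theorem iterate_cesaroMean_single_nonneg (m : ℕ) : 0 ≤ cesaroMean^[m] (Pi.single 0 1) :=
  (Pi.single_nonneg.2 zero_le_one).trans (monotone_iterate_cesaroMean_single m.zero_le)

theorem tendsto_iterate_cesaroMean_single :
    Tendsto (fun m => cesaroMean^[m] (Pi.single 0 1)) atTop (𝓝 1) := by
  have hle : ∀ m, cesaroMean^[m] (Pi.single 0 1) ≤ 1 := fun m =>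
    (cesaroMean_mono.iterate m (fun n => by rcases n <;> simp)).trans_eq
      (Function.iterate_fixed (cesaroMean_const 1) m)
  have hlim := tendsto_atTop_ciSup monotone_iterate_cesaroMean_single
    ⟨1, Set.forall_mem_range.2 hle⟩
  set L := ⨆ m, cesaroMean^[m] (Pi.single 0 1)
  have hfix : cesaroMean L = L := tendsto_nhds_unique
    ((continuous_cesaroMean.tendsto L).comp hlim)
    (by simpa only [Function.comp_def, Function.iterate_succ_apply'] using
      (tendsto_add_atTop_iff_nat 1).2 hlim)
  have hL0 : L 0 = 1 := tendsto_nhds_unique ((continuous_apply 0).tendsto L |>.comp hlim)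
    (by simp [Function.comp_def, iterate_cesaroMean_apply_zero])
  convert hlim
  ext n
  rw [eq_const_of_cesaroMean_eq hfix n, hL0]; rfl

theorem lp.sum_norm_apply_le_norm {α : Type*} {E : α → Type*} [∀ i, NormedAddCommGroup (E i)]
    (x : lp E 1) (F : Finset α) : ∑ i ∈ F, ‖x i‖ ≤ ‖x‖ := by
  simpa using lp.sum_rpow_le_norm_rpow (by norm_num) x F

theorem IsCesaroOp.pow_single_apply {w : ℕ → ℝ} (hw : ∀ n, w n ≠ 0) {T : ellOne →L[ℂ] ellOne}
    (hT : IsCesaroOp w w T) (m n : ℕ) :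
    ((T ^ m) (lp.single 1 0 1) : ℕ → ℂ) n
      = ((w n / w 0 * cesaroMean^[m] (Pi.single 0 1) n : ℝ) : ℂ) := by
  induction m generalizing n with
  | zero =>
    rcases n with _ | n
    · simp [hw 0]
    · simp [lp.single_apply]
  | succ m ih =>
    have hw' : ∀ k, ((w k : ℝ) : ℂ) ≠ 0 := fun k => Complex.ofReal_ne_zero.2 (hw k)
    rw [pow_succ', mul_apply_eq_comp, hT, Function.iterate_succ_apply', cesaroMean]
    simp only [ih]
    push_cast
    rw [Finset.mul_sum, Finset.sum_div, Finset.mul_sum]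
    refine Finset.sum_congr rfl fun k _ => ?_
    field_simp [hw' k, hw' 0]

theorem IsCesaroOp.cesaroAverage_single_apply {w : ℕ → ℝ} (hw : ∀ n, w n ≠ 0)
    {T : ellOne →L[ℂ] ellOne} (hT : IsCesaroOp w w T) (N n : ℕ) :
    (((N : ℂ)⁻¹ • ∑ m ∈ Finset.Icc 1 N, T ^ m) (lp.single 1 0 1) : ℕ → ℂ) n
      = ((w n / w 0 * ((N : ℝ)⁻¹ * ∑ m ∈ Finset.Icc 1 N, cesaroMean^[m] (Pi.single 0 1) n)
          : ℝ) : ℂ) := by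
  simp only [smul_apply, sum_apply, lp.coeFn_smul, lp.coeFn_sum, Pi.smul_apply, Finset.sum_apply,
    hT.pow_single_apply hw]
  push_cast
  rw [Finset.mul_sum, Finset.mul_sum, Finset.smul_sum]
  exact Finset.sum_congr rfl fun m _ => by rw [smul_eq_mul]; ring

theorem IsCesaroOp.sum_div_le_of_norm_cesaroAverage_le {w : ℕ → ℝ} (hw : ∀ n, 0 < w n)
    {T : ellOne →L[ℂ] ellOne} (hT : IsCesaroOp w w T) {C : ℝ}
    (hC : ∀ N : ℕ, 1 ≤ N → ‖(N : ℂ)⁻¹ • ∑ m ∈ Finset.Icc 1 N, T ^ m‖ ≤ C) (F : Finset ℕ) :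
    ∑ n ∈ F, w n / w 0 ≤ C := by
  set a : ℕ → ℕ → ℝ :=
    fun N n => (N : ℝ)⁻¹ * ∑ m ∈ Finset.Icc 1 N, cesaroMean^[m] (Pi.single 0 1) n
  have ha : ∀ n, Tendsto (fun N => a N n) atTop (𝓝 1) := fun n => by
    have h : Tendsto (fun m => cesaroMean^[m + 1] (Pi.single 0 1) n) atTop (𝓝 1) :=
      ((continuous_apply n).tendsto 1).comp
        (tendsto_iterate_cesaroMean_single.comp (tendsto_add_atTop_nat 1))
    refine h.cesaro.congr fun N => ?_
    rw [Finset.range_eq_Ico, Finset.sum_Ico_add' (fun m => cesaroMean^[m] (Pi.single 0 1) n),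
      zero_add, Finset.Ico_add_one_right_eq_Icc]
  have hbound : ∀ N, 1 ≤ N → ∑ n ∈ F, w n / w 0 * a N n ≤ C := by
    intro N hN
    set A := (N : ℂ)⁻¹ • ∑ m ∈ Finset.Icc 1 N, T ^ m
    calc ∑ n ∈ F, w n / w 0 * a N n = ∑ n ∈ F, ‖(A (lp.single 1 0 1) : ℕ → ℂ) n‖ := by
          refine Finset.sum_congr rfl fun n _ => ?_
          rw [hT.cesaroAverage_single_apply (fun n => (hw n).ne'), Complex.norm_real,
            Real.norm_of_nonneg]
          exact mul_nonneg (div_nonneg (hw n).le (hw 0).le) (mul_nonneg (by positivity)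
            (Finset.sum_nonneg fun m _ => iterate_cesaroMean_single_nonneg m n))
      _ ≤ ‖A (lp.single 1 0 1)‖ := lp.sum_norm_apply_le_norm _ F
      _ ≤ ‖A‖ * ‖(lp.single 1 0 1 : ellOne)‖ := A.le_opNorm _
      _ ≤ C := by rw [lp.norm_single (by norm_num), norm_one, mul_one]; exact hC N hN
  have hlim := tendsto_finsetSum F fun n _ => (ha n).const_mul (w n / w 0)
  simpa using le_of_tendsto hlim (eventually_atTop.2 ⟨1, hbound⟩)

theorem PowerBounded.cesaroBounded {T : ellOne →L[ℂ] ellOne} (h : PowerBounded T) :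
    CesaroBounded T := by
  obtain ⟨C, hC⟩ := h
  refine ⟨C, fun N hN => ?_⟩
  calc ‖(N : ℂ)⁻¹ • ∑ m ∈ Finset.Icc 1 N, T ^ m‖
      ≤ (N : ℝ)⁻¹ * ∑ m ∈ Finset.Icc 1 N, ‖T ^ m‖ := by
        rw [norm_smul, norm_inv, Complex.norm_natCast]
        gcongr
        exact norm_sum_le _ _
    _ ≤ (N : ℝ)⁻¹ * (N * C) := by
        gcongr
        simpa using Finset.sum_le_card_nsmul _ _ C fun m hm => hC m (Finset.mem_Icc.1 hm).1
    _ = C := by field_simp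

theorem MeanErgodic.cesaroBounded {T : ellOne →L[ℂ] ellOne} (h : MeanErgodic T) :
    CesaroBounded T := by
  have hpt : ∀ x, ∃ C, ∀ N : ℕ, ‖((N : ℂ)⁻¹ • ∑ m ∈ Finset.Icc 1 N, T ^ m) x‖ ≤ C := fun x => by
    obtain ⟨y, hy⟩ := h x
    obtain ⟨C, hC⟩ := hy.norm.bddAbove_range
    exact ⟨C, fun N => by simpa using hC ⟨N, rfl⟩⟩
  obtain ⟨C, hC⟩ := banach_steinhaus hpt
  exact ⟨C, fun N _ => hC N⟩

theorem summable_of_cesaroBounded_general (w : ℕ → ℝ)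
    (hw : ∀ n, 0 < w n)
    (T : ellOne →L[ℂ] ellOne) (hT : IsCesaroOp w w T) :
    (CesaroBounded T → Summable w) ∧
      (PowerBounded T → Summable w) ∧ (MeanErgodic T → Summable w) := by
  have main : CesaroBounded T → Summable w := fun ⟨C, hC⟩ =>
    summable_of_sum_le (fun n => (hw n).le) fun F => by
      simpa [← Finset.sum_div, div_le_iff₀ (hw 0)] using
        hT.sum_div_le_of_norm_cesaroAverage_le hw hC F
  exact ⟨main, fun h => main h.cesaroBounded, fun h => main h.cesaroBounded⟩

theorem summable_of_cesaroBounded (w : ℕ → ℝ)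
    (hw : ∀ n, 0 < w n) (hwb : ∃ C, ∀ n, w n ≤ C)
    (hM : Mvw w w ≠ ⊤)
    (T : ellOne →L[ℂ] ellOne) (hT : IsCesaroOp w w T) :
    (CesaroBounded T → Summable w) ∧
      (PowerBounded T → Summable w) ∧ (MeanErgodic T → Summable w) :=
  summable_of_cesaroBounded_general w hw T hT
end
end

section
/- Let w be a weight with 𝒰_w := sup_{m≥1} (1/(m·w(m+1))) ∑_{n=m+1}^∞ w(n) < ∞ (this implies ∑_{n≥1} w(n) < ∞ and M_w < ∞, so the operator T below exists), and let T : ℓ¹ → ℓ¹ be the continuous linear operator satisfying (T x)(n) = (w(n)/n) ∑_{k=1}^n x(k)/w(k) for all x ∈ ℓ¹ and n ≥ 1. Then T is power bounded (sup_{m≥1} ‖T^m‖ < ∞) and uniformly mean ergodic: the Cesàro averages (1/n) ∑_{m=1}^n T^m converge in the operator norm of L(ℓ¹) as n → ∞. -/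
/- STATEMENT 18: If 𝒰_w < ∞ then the transferred Cesàro operator T on ℓ¹ is power bounded
and uniformly mean ergodic (the Cesàro averages converge in operator norm).
Index `n : ℕ` corresponds to the paper's `n+1`. -/

open Filter Topology

noncomputable section

def Uw (w : ℕ → ℝ) : ENNReal :=
  ⨆ i : ℕ, ENNReal.ofReal (1 / (((i : ℝ) + 1) * w (i + 1))) *
    ∑' k : ℕ, ENNReal.ofReal (w (i + 1 + k))

open Finset
open scoped ENNReal

/-!
Write `S n = ∑_{k ≥ n} w k`; the hypothesis says `S n ≤ U n w n`. Weight the ℓ¹ norm by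
`d n = 1 + S n / (n w n) ∈ [1, 1 + U]`. For this norm, column `k ≥ 1` of the matrix of `T` has sum
`∑_{n ≥ k} d n w n / ((n + 1) d k w k)`; since `d n w n / (n + 1) = S n / n - S (n + 1) / (n + 1)`
telescopes, it is at most `(S k / k) / (d k w k) ≤ U / (U + 1)`. So `T` is a strict contraction of
the weighted norm on the hyperplane `x 0 = 0`. As `T` fixes the first coordinate, `x - T x` lies in
that hyperplane, hence `‖T^m - T^(m+1)‖` decays geometrically and `T^m` converges in operator norm.
-/

section

variable {𝕜 E : Type*} [NontriviallyNormedField 𝕜] [NormedAddCommGroup E] [NormedSpace 𝕜 E]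

theorem norm_pow_apply_le_of_contraction (f : E →L[𝕜] E) {S : Set E} (hS : Set.MapsTo f S S)
    (N : E → ℝ≥0∞) {K q : ℝ} (hK : 0 ≤ K) (hq : 0 ≤ q)
    (hlow : ∀ x, ENNReal.ofReal ‖x‖ ≤ N x) (hup : ∀ x, N x ≤ ENNReal.ofReal (K * ‖x‖))
    (hf : ∀ x ∈ S, N (f x) ≤ ENNReal.ofReal q * N x) {x : E} (hx : x ∈ S) (m : ℕ) :
    ‖(f ^ m) x‖ ≤ K * q ^ m * ‖x‖ := by
  have hpow : ∀ m, (f ^ m) x ∈ S ∧ N ((f ^ m) x) ≤ ENNReal.ofReal q ^ m * N x := by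
    intro m
    induction m with
    | zero => simpa using hx
    | succ m ih =>
      rw [pow_succ', mul_apply_eq_comp, pow_succ', mul_assoc]
      exact ⟨hS ih.1, (hf _ ih.1).trans (mul_le_mul_right ih.2 _)⟩
  have : ENNReal.ofReal ‖(f ^ m) x‖ ≤ ENNReal.ofReal (K * q ^ m * ‖x‖) := calc
    _ ≤ ENNReal.ofReal q ^ m * N x := (hlow _).trans (hpow m).2
    _ ≤ ENNReal.ofReal q ^ m * ENNReal.ofReal (K * ‖x‖) := mul_le_mul_right (hup x) _
    _ = ENNReal.ofReal (K * q ^ m * ‖x‖) := by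
      rw [← ENNReal.ofReal_pow hq, ← ENNReal.ofReal_mul (by positivity)]
      ring_nf
  exact (ENNReal.ofReal_le_ofReal_iff (by positivity)).1 this

theorem exists_tendsto_pow_of_norm_pow_apply_sub_le [CompleteSpace E] (f : E →L[𝕜] E)
    {K q : ℝ} (hK : 0 ≤ K) (hq₀ : 0 ≤ q) (hq₁ : q < 1)
    (hf : ∀ x m, ‖(f ^ m) (x - f x)‖ ≤ K * q ^ m * ‖x - f x‖) :
    ∃ P, Tendsto (fun m => f ^ m) atTop (𝓝 P) := by
  refine cauchySeq_tendsto_of_complete (cauchySeq_of_le_geometric q (K * ‖1 - f‖) hq₁ fun m => ?_)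
  rw [dist_eq_norm]
  refine ContinuousLinearMap.opNorm_le_bound _ (by positivity) fun x => ?_
  have hsub : (f ^ m - f ^ (m + 1)) x = (f ^ m) (x - f x) := by
    rw [pow_succ, sub_apply, mul_apply_eq_comp, map_sub]
  calc ‖(f ^ m - f ^ (m + 1)) x‖ ≤ K * q ^ m * ‖x - f x‖ := hsub ▸ hf x m
    _ = K * q ^ m * ‖(1 - f) x‖ := rfl
    _ ≤ K * q ^ m * (‖1 - f‖ * ‖x‖) := by gcongr; exact (1 - f).le_opNorm x
    _ = K * ‖1 - f‖ * q ^ m * ‖x‖ := by ring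

end

theorem Filter.Tendsto.cesaro_smul_Icc {E : Type*} [NormedAddCommGroup E] [NormedSpace ℂ E]
    {u : ℕ → E} {l : E} (h : Tendsto u atTop (𝓝 l)) :
    Tendsto (fun n : ℕ => (n : ℂ)⁻¹ • ∑ m ∈ Icc 1 n, u m) atTop (𝓝 l) := by
  have hshift := (h.comp (tendsto_add_atTop_nat 1)).cesaro_smul
  refine hshift.congr fun n => ?_
  rw [← Complex.coe_smul, Function.comp_def, range_eq_Ico, sum_Ico_add' u 0 n 1]
  push_cast
  rfl

section

variable {w : ℕ → ℝ}

def tailSum (w : ℕ → ℝ) (n : ℕ) : ℝ := ∑' k, w (n + k)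

/-- At `n = 0` the division by zero makes the weight `1`. -/
def normWeight (w : ℕ → ℝ) (n : ℕ) : ℝ := 1 + tailSum w n / (n * w n)

def weightedNorm (w : ℕ → ℝ) (x : ℕ → ℂ) : ℝ≥0∞ :=
  ∑' n, ENNReal.ofReal (normWeight w n * ‖x n‖)

theorem tailSum_nonneg (hw : ∀ n, 0 < w n) (n : ℕ) : 0 ≤ tailSum w n :=
  tsum_nonneg fun _ => (hw _).le

theorem Summable.comp_nat_add_left (hsum : Summable w) (n : ℕ) : Summable fun k => w (n + k) := by
  simpa only [add_comm] using (summable_nat_add_iff n).2 hsum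

theorem tailSum_eq_add (hsum : Summable w) (n : ℕ) : tailSum w n = w n + tailSum w (n + 1) := by
  rw [tailSum, (hsum.comp_nat_add_left n).tsum_eq_zero_add, add_zero, tailSum]
  exact congrArg _ (tsum_congr fun k => congrArg w (by omega))

theorem ofReal_inv_mul_tsum_le_Uw (w : ℕ → ℝ) (i : ℕ) :
    ENNReal.ofReal (1 / (((i : ℝ) + 1) * w (i + 1))) * ∑' k, ENNReal.ofReal (w (i + 1 + k)) ≤
      Uw w :=
  le_iSup (fun i : ℕ => ENNReal.ofReal (1 / (((i : ℝ) + 1) * w (i + 1))) *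
    ∑' k, ENNReal.ofReal (w (i + 1 + k))) i

theorem summable_of_Uw_ne_top (hw : ∀ n, 0 < w n) (hU : Uw w ≠ ⊤) : Summable w := by
  have hfactor : ENNReal.ofReal (1 / ((((0 : ℕ) : ℝ) + 1) * w (0 + 1))) ≠ 0 := by
    simpa using hw 1
  have htail := ENNReal.lt_top_of_mul_ne_top_right
    (ne_top_of_le_ne_top hU (ofReal_inv_mul_tsum_le_Uw w 0)) hfactor
  have := ENNReal.summable_toReal htail.ne
  simp only [ENNReal.toReal_ofReal (hw _).le] at this
  exact (summable_nat_add_iff 1).1 (by simpa only [add_comm] using this)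

theorem tailSum_div_le_Uw (hw : ∀ n, 0 < w n) (hU : Uw w ≠ ⊤) (n : ℕ) :
    tailSum w n / (n * w n) ≤ (Uw w).toReal := by
  rcases n with _ | i
  · simp
  have hsum := summable_of_Uw_ne_top hw hU
  have hterm := ofReal_inv_mul_tsum_le_Uw w i
  rw [← ENNReal.ofReal_tsum_of_nonneg (fun _ => (hw _).le) (hsum.comp_nat_add_left _),
    ← ENNReal.ofReal_mul (by have := hw (i + 1); positivity),
    ENNReal.ofReal_le_iff_le_toReal hU] at hterm
  convert hterm using 1
  rw [tailSum]
  push_cast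
  ring

end

section

variable {w : ℕ → ℝ} {U : ℝ}

theorem nonneg_of_forall_tailSum_div_le (hρ : ∀ n, tailSum w n / (n * w n) ≤ U) : 0 ≤ U := by
  -- at `n = 0` the left side is `tailSum w 0 / 0 = 0`
  simpa using hρ 0

theorem one_le_normWeight (hw : ∀ n, 0 < w n) (n : ℕ) : 1 ≤ normWeight w n :=
  le_add_of_nonneg_right (div_nonneg (tailSum_nonneg hw n) (by have := hw n; positivity))

theorem normWeight_le (hρ : ∀ n, tailSum w n / (n * w n) ≤ U) (n : ℕ) :
    normWeight w n ≤ 1 + U :=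
  add_le_add_right (hρ n) 1

theorem ellOne.hasSum_norm (x : ellOne) : HasSum (fun n => ‖x n‖) ‖x‖ := by
  simpa using lp.hasSum_norm (p := 1) (by norm_num) x

theorem ofReal_norm_le_weightedNorm (hw : ∀ n, 0 < w n) (x : ellOne) :
    ENNReal.ofReal ‖x‖ ≤ weightedNorm w x := by
  rw [← (ellOne.hasSum_norm x).tsum_eq,
    ENNReal.ofReal_tsum_of_nonneg (fun _ => norm_nonneg _) (ellOne.hasSum_norm x).summable]
  exact ENNReal.tsum_le_tsum fun n => ENNReal.ofReal_le_ofReal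
    (le_mul_of_one_le_left (norm_nonneg _) (one_le_normWeight hw n))

theorem weightedNorm_le (hρ : ∀ n, tailSum w n / (n * w n) ≤ U) (x : ellOne) :
    weightedNorm w x ≤ ENNReal.ofReal ((1 + U) * ‖x‖) := by
  have hU := nonneg_of_forall_tailSum_div_le hρ
  have hx := (ellOne.hasSum_norm x).mul_left (1 + U)
  rw [← hx.tsum_eq, ENNReal.ofReal_tsum_of_nonneg (fun _ => by positivity) hx.summable]
  exact ENNReal.tsum_le_tsum fun n => ENNReal.ofReal_le_ofReal
    (mul_le_mul_of_nonneg_right (normWeight_le hρ n) (norm_nonneg _))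

theorem normWeight_mul_div_eq_sub (hw : ∀ n, 0 < w n) (hsum : Summable w) {n : ℕ} (hn : n ≠ 0) :
    normWeight w n * w n / (n + 1) =
      tailSum w n / n - tailSum w (n + 1) / ((n + 1 : ℕ) : ℝ) := by
  have := (hw n).ne'
  rw [normWeight, tailSum_eq_add hsum n]
  field_simp
  push_cast
  ring

theorem sum_Ico_normWeight_mul_div_le (hw : ∀ n, 0 < w n) (hsum : Summable w) {k : ℕ}
    (hk : k ≠ 0) (N : ℕ) :
    ∑ n ∈ Ico k N, normWeight w n * w n / (n + 1) ≤ tailSum w k / k := by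
  have hdiv_nonneg : ∀ n, 0 ≤ tailSum w n / n := fun n => by
    have := tailSum_nonneg hw n; positivity
  rcases le_or_gt k N with hkN | hNk
  · have htele := Finset.sum_Ico_sub (fun n => -(tailSum w n / n)) hkN
    rw [sum_congr rfl fun n hn => normWeight_mul_div_eq_sub hw hsum (n := n) (by
      simp only [mem_Ico] at hn; omega)]
    simp only [sub_neg_eq_add, neg_add_eq_sub] at htele
    linarith [hdiv_nonneg N]
  · simpa [Ico_eq_empty_of_le hNk.le] using hdiv_nonneg k

theorem tailSum_div_le (hw : ∀ n, 0 < w n) (hρ : ∀ n, tailSum w n / (n * w n) ≤ U) (k : ℕ) :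
    tailSum w k / k ≤ U / (U + 1) * (normWeight w k * w k) := by
  have hU := nonneg_of_forall_tailSum_div_le hρ
  have hwk := hw k
  have hsplit : tailSum w k / k = tailSum w k / (k * w k) * w k := by field_simp
  rw [hsplit, normWeight]
  set ρ := tailSum w k / (k * w k)
  have hgap : U / (U + 1) * ((1 + ρ) * w k) - ρ * w k = (U - ρ) * w k / (U + 1) := by
    field_simp
    ring
  have : 0 ≤ (U - ρ) * w k / (U + 1) :=
    div_nonneg (mul_nonneg (sub_nonneg.2 (hρ k)) hwk.le) (by linarith)
  linarith

theorem tsum_ofReal_ite_normWeight_mul_div_le (hw : ∀ n, 0 < w n) (hsum : Summable w)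
    (hρ : ∀ n, tailSum w n / (n * w n) ≤ U) {k : ℕ} (hk : k ≠ 0) :
    ∑' n, ENNReal.ofReal (if k ≤ n then normWeight w n * w n / (n + 1) else 0) ≤
      ENNReal.ofReal (U / (U + 1) * (normWeight w k * w k)) := by
  refine ENNReal.tsum_le_of_sum_range_le fun N => ?_
  rw [← ENNReal.ofReal_sum_of_nonneg fun n _ => by
    have := one_le_normWeight hw n; have := hw n; positivity]
  refine ENNReal.ofReal_le_ofReal ?_
  have hfilter : {n ∈ range N | k ≤ n} = Ico k N := by ext; simp [and_comm]
  rw [← sum_filter, hfilter]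
  exact (sum_Ico_normWeight_mul_div_le hw hsum hk N).trans (tailSum_div_le hw hρ k)

theorem IsCesaroOp.apply_zero (hw : ∀ n, 0 < w n) {T : ellOne →L[ℂ] ellOne}
    (hT : IsCesaroOp w w T) (x : ellOne) : T x 0 = x 0 := by
  rw [hT x 0]
  simp only [CharP.cast_eq_zero, zero_add, div_one, range_one, sum_singleton]
  exact mul_div_cancel₀ _ (Complex.ofReal_ne_zero.2 (hw 0).ne')

theorem IsCesaroOp.normWeight_mul_norm_apply_le (hw : ∀ n, 0 < w n)
    {T : ellOne →L[ℂ] ellOne} (hT : IsCesaroOp w w T) (x : ellOne) (n : ℕ) :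
    normWeight w n * ‖T x n‖ ≤
      ∑ k ∈ range (n + 1), normWeight w n * w n / (n + 1) * (‖x k‖ / w k) := by
  have hwn := (hw n).le
  have hnorm_div : ∀ k, ‖x k / ((w k : ℝ) : ℂ)‖ = ‖x k‖ / w k := fun k => by
    rw [norm_div, Complex.norm_real, Real.norm_of_nonneg (hw k).le]
  calc normWeight w n * ‖T x n‖
      = normWeight w n * (w n / (n + 1) * ‖∑ k ∈ range (n + 1), x k / ((w k : ℝ) : ℂ)‖) := by
        rw [hT x n, norm_mul, Complex.norm_real, Real.norm_of_nonneg (by positivity)]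
    _ ≤ normWeight w n * (w n / (n + 1) * ∑ k ∈ range (n + 1), ‖x k‖ / w k) := by
        have := one_le_normWeight hw n
        gcongr
        exact (norm_sum_le _ _).trans_eq (sum_congr rfl fun k _ => hnorm_div k)
    _ = ∑ k ∈ range (n + 1), normWeight w n * w n / (n + 1) * (‖x k‖ / w k) := by
        rw [mul_sum, mul_sum]
        exact sum_congr rfl fun _ _ => by ring

theorem IsCesaroOp.weightedNorm_apply_le (hw : ∀ n, 0 < w n) (hsum : Summable w)
    (hρ : ∀ n, tailSum w n / (n * w n) ≤ U) {T : ellOne →L[ℂ] ellOne} (hT : IsCesaroOp w w T)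
    {x : ellOne} (hx : x 0 = 0) :
    weightedNorm w (T x) ≤ ENNReal.ofReal (U / (U + 1)) * weightedNorm w x := by
  have hU := nonneg_of_forall_tailSum_div_le hρ
  have hb : ∀ n, 0 ≤ normWeight w n * w n / (n + 1) := fun n => by
    have := one_le_normWeight hw n; have := hw n; positivity
  set K : ℕ → ℕ → ℝ≥0∞ := fun n k =>
    ENNReal.ofReal (if k ≤ n then normWeight w n * w n / (n + 1) else 0)
  have hrow : ∀ n, ENNReal.ofReal (normWeight w n * ‖T x n‖) ≤
      ∑' k, K n k * ENNReal.ofReal (‖x k‖ / w k) := fun n => calc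
    _ ≤ ENNReal.ofReal
          (∑ k ∈ range (n + 1), normWeight w n * w n / (n + 1) * (‖x k‖ / w k)) :=
        ENNReal.ofReal_le_ofReal (hT.normWeight_mul_norm_apply_le hw x n)
    _ = ∑ k ∈ range (n + 1), K n k * ENNReal.ofReal (‖x k‖ / w k) := by
        rw [ENNReal.ofReal_sum_of_nonneg fun k _ => by have := hw k; have := hb n; positivity]
        refine sum_congr rfl fun k hk => ?_
        simp only [K, if_pos (Nat.lt_succ_iff.1 (mem_range.1 hk)), ENNReal.ofReal_mul (hb n)]
    _ ≤ _ := ENNReal.sum_le_tsum _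
  have hcol : ∀ k, (∑' n, K n k) * ENNReal.ofReal (‖x k‖ / w k) ≤
      ENNReal.ofReal (U / (U + 1)) * ENNReal.ofReal (normWeight w k * ‖x k‖) := by
    intro k
    rcases eq_or_ne k 0 with rfl | hk
    · simp [hx]
    have := hw k
    calc _ ≤ ENNReal.ofReal (U / (U + 1) * (normWeight w k * w k)) *
          ENNReal.ofReal (‖x k‖ / w k) :=
          mul_le_mul_left (tsum_ofReal_ite_normWeight_mul_div_le hw hsum hρ hk) _
      _ = _ := by
          rw [← ENNReal.ofReal_mul (by have := one_le_normWeight hw k; positivity),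
            ← ENNReal.ofReal_mul (by positivity)]
          congr 1
          field_simp
  calc weightedNorm w (T x) ≤ ∑' n, ∑' k, K n k * ENNReal.ofReal (‖x k‖ / w k) :=
        ENNReal.tsum_le_tsum hrow
    _ = ∑' k, (∑' n, K n k) * ENNReal.ofReal (‖x k‖ / w k) := by
        rw [ENNReal.tsum_comm]
        simp_rw [ENNReal.tsum_mul_right]
    _ ≤ _ := (ENNReal.tsum_le_tsum hcol).trans_eq ENNReal.tsum_mul_left

end

theorem IsCesaroOp.exists_tendsto_pow {w : ℕ → ℝ} {U : ℝ} (hw : ∀ n, 0 < w n)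
    (hsum : Summable w) (hρ : ∀ n, tailSum w n / (n * w n) ≤ U) {T : ellOne →L[ℂ] ellOne}
    (hT : IsCesaroOp w w T) : ∃ P, Tendsto (fun m => T ^ m) atTop (𝓝 P) := by
  have hU := nonneg_of_forall_tailSum_div_le hρ
  have hinv : Set.MapsTo T {x | x 0 = 0} {x | x 0 = 0} := fun x hx => by
    simpa [hT.apply_zero hw] using hx
  refine exists_tendsto_pow_of_norm_pow_apply_sub_le T (by linarith : 0 ≤ 1 + U)
    (by positivity : 0 ≤ U / (U + 1)) ((div_lt_one (by linarith)).2 (by linarith))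
    fun x m => norm_pow_apply_le_of_contraction T hinv (fun x : ellOne => weightedNorm w x)
      (by linarith) (by positivity) (ofReal_norm_le_weightedNorm hw) (weightedNorm_le hρ)
      (fun y hy => hT.weightedNorm_apply_le hw hsum hρ hy) ?_ m
  simp [hT.apply_zero hw]

theorem power_bounded_and_uniformly_mean_ergodic_of_Uw_general (w : ℕ → ℝ)
    (hw : ∀ n, 0 < w n)
    (hU : Uw w ≠ ⊤)
    (T : ellOne →L[ℂ] ellOne) (hT : IsCesaroOp w w T) :
    (∃ C : ℝ, ∀ m : ℕ, 1 ≤ m → ‖T ^ m‖ ≤ C) ∧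
      ∃ P : ellOne →L[ℂ] ellOne,
        Tendsto (fun n : ℕ => ((n : ℂ))⁻¹ • ∑ m ∈ Finset.Icc 1 n, T ^ m) atTop (nhds P) := by
  obtain ⟨P, hP⟩ :=
    hT.exists_tendsto_pow hw (summable_of_Uw_ne_top hw hU) (tailSum_div_le_Uw hw hU)
  obtain ⟨C, hC⟩ := hP.norm.bddAbove_range
  exact ⟨⟨C, fun m _ => hC (Set.mem_range_self m)⟩, P, hP.cesaro_smul_Icc⟩

theorem power_bounded_and_uniformly_mean_ergodic_of_Uw (w : ℕ → ℝ)
    (hw : ∀ n, 0 < w n) (hwb : ∃ C, ∀ n, w n ≤ C)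
    (hU : Uw w ≠ ⊤)
    (T : ellOne →L[ℂ] ellOne) (hT : IsCesaroOp w w T) :
    (∃ C : ℝ, ∀ m : ℕ, 1 ≤ m → ‖T ^ m‖ ≤ C) ∧
      ∃ P : ellOne →L[ℂ] ellOne,
        Tendsto (fun n : ℕ => ((n : ℂ))⁻¹ • ∑ m ∈ Finset.Icc 1 n, T ^ m) atTop (nhds P) :=
  power_bounded_and_uniformly_mean_ergodic_of_Uw_general w hw hU T hT
end
end
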